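/- Let (T, θ) be a balanced and stratified staged tree and let T' be the tree obtained from T by contracting the edges in E_1 = {e : e is the unique outgoing edge of its source}. Then (T', θ) (with labels of contracted edges specialized to 1) is also balanced. -/

import Mathlib

open MvPolynomial

inductive STree (L : Type) where
  | leaf : STree L
  | node : List (L × STree L) → STree L

namespace STree

variable {L : Type}

def children : STree L → List (L × STree L)
  | .leaf => []
  | .node cs => cs

def paths : STree L → List (List L)
  | .leaf => [[]]
  | .node cs => cs.attach.flatMap (fun x => (paths x.1.2).map (fun p => x.1.1 :: p))
termination_by t => sizeOf t
decreasing_by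
  have h := List.sizeOf_lt_of_mem x.2
  obtain ⟨⟨l, c⟩, hm⟩ := x
  simp only [Prod.mk.sizeOf_spec] at h
  simp only [STree.node.sizeOf_spec]
  omega

noncomputable def tpoly (T : STree L) : MvPolynomial L ℝ :=
  ((paths T).map (fun p => (p.map X).prod)).sum

def outLabels (T : STree L) : List L := T.children.map Prod.fst

def SameStage (v w : STree L) : Prop := ∀ l, l ∈ v.outLabels ↔ l ∈ w.outLabels

inductive OccursAt : STree L → ℕ → STree L → Prop where
  | refl (T : STree L) : OccursAt T 0 T
  | child {cs : List (L × STree L)} {l : L} {c v : STree L} {n : ℕ} :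
      (l, c) ∈ cs → OccursAt c n v → OccursAt (.node cs) (n + 1) v

def IsStagedTree (T : STree L) : Prop :=
  (∀ n cs, OccursAt T n (.node cs) → cs ≠ [] ∧ (cs.map Prod.fst).Nodup) ∧
  (∀ n m v w, OccursAt T n v → OccursAt T m w →
    (SameStage v w ∨ ∀ l, ¬(l ∈ v.outLabels ∧ l ∈ w.outLabels)))

def Star (v w : STree L) : Prop :=
  ∀ l l' c c' d d', l ≠ l' →
    (l, c) ∈ v.children → (l', c') ∈ v.children →
    (l, d) ∈ w.children → (l', d') ∈ w.children →
    tpoly c * tpoly d' = tpoly d * tpoly c'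

def Balanced (T : STree L) : Prop :=
  ∀ n m v w, OccursAt T n v → OccursAt T m w → SameStage v w → Star v w

def Stratified (T : STree L) : Prop :=
  (∀ n m, OccursAt T n .leaf → OccursAt T m .leaf → n = m) ∧
  (∀ n m v w, OccursAt T n v → OccursAt T m w → SameStage v w → n = m)

end STree

namespace STree
variable {L : Type}

def trunc : ℕ → STree L → STree L
  | 0, _ => .leaf
  | _ + 1, .leaf => .leaf
  | q + 1, .node cs => .node (cs.attach.map (fun x => (x.1.1, trunc q x.1.2)))

def contract : STree L → STree L
  | .leaf => .leaf
  | .node [(_, c)] => contract c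
  | .node cs => .node (cs.attach.map (fun x => (x.1.1, contract x.1.2)))
termination_by t => sizeOf t
decreasing_by
  · simp only [STree.node.sizeOf_spec, List.cons.sizeOf_spec, Prod.mk.sizeOf_spec,
      List.nil.sizeOf_spec]
    omega
  · have h := List.sizeOf_lt_of_mem x.2
    obtain ⟨⟨l, c⟩, hm⟩ := x
    simp only [Prod.mk.sizeOf_spec] at h
    simp only [STree.node.sizeOf_spec]
    omega

def glueAux (f : List L → List L) : List L → STree L → STree L
  | pre, .leaf => .node ((f pre).map (fun l => (l, .leaf)))
  | pre, .node cs => .node (cs.attach.map (fun x => (x.1.1, glueAux f (pre ++ [x.1.1]) x.1.2)))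
termination_by _ t => sizeOf t
decreasing_by
  have h := List.sizeOf_lt_of_mem x.2
  obtain ⟨⟨l, c⟩, hm⟩ := x
  simp only [Prod.mk.sizeOf_spec] at h
  simp only [STree.node.sizeOf_spec]
  omega

def cut : ℕ → STree L → List (List L × STree L)
  | 0, t => [([], t)]
  | _ + 1, .leaf => []
  | d + 1, .node cs => cs.attach.flatMap
      (fun x => (cut d x.1.2).map (fun q => (x.1.1 :: q.1, q.2)))

def OneLevel (T : STree L) : Prop :=
  ∃ cs, T = STree.node cs ∧ cs ≠ [] ∧ ∀ p ∈ cs, p.2 = STree.leaf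

def labelSet (T : STree L) : Set L := {l | ∃ p ∈ paths T, l ∈ p}

end STree

/-!
Every vertex of the contracted tree is the contraction of a vertex of `T` that does not have
exactly one child; both have the same outgoing labels, and the children of the former are the
contractions of the children of the latter. In a staged tree the label of a contracted edge never
labels an edge leaving a vertex with several children, so the interpolating polynomial of a
contracted subtree is the image of the original one under the algebra map sending the labels of
contracted edges to `1`. Applying this ring map to condition (⋆) in `T` gives (⋆) in the
contracted tree.
-/

namespace STree

variable {L : Type}

theorem sizeOf_lt_sizeOf_node {cs : List (L × STree L)} {p : L × STree L} (hp : p ∈ cs) :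
    sizeOf p.2 < sizeOf (STree.node cs) := by
  have h := List.sizeOf_lt_of_mem hp
  obtain ⟨l, c⟩ := p
  simp only [Prod.mk.sizeOf_spec] at h
  simp only [STree.node.sizeOf_spec]
  omega

@[elab_as_elim, induction_eliminator]
theorem induction {motive : STree L → Prop} (leaf : motive .leaf)
    (node : ∀ cs, (∀ p ∈ cs, motive p.2) → motive (.node cs)) (t : STree L) : motive t :=
  match t with
  | .leaf => leaf
  | .node cs => node cs fun p _ => induction leaf node p.2
termination_by sizeOf t
decreasing_by exact sizeOf_lt_sizeOf_node ‹_›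

theorem OccursAt.trans {T u v : STree L} {m k : ℕ} (h : OccursAt T m u) (h' : OccursAt u k v) :
    OccursAt T (m + k) v := by
  induction h with
  | refl => simpa using h'
  | child hmem _ ih => simpa only [Nat.add_right_comm] using OccursAt.child hmem (ih h')

theorem OccursAt.of_mem_children {T u c : STree L} {m : ℕ} {l : L} (h : OccursAt T m u)
    (hc : (l, c) ∈ u.children) : OccursAt T (m + 1) c := by
  cases u with
  | leaf => simp [children] at hc
  | node cs => exact h.trans (.child hc (.refl c))

theorem tpoly_leaf : tpoly (.leaf : STree L) = 1 := by simp [tpoly, paths]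

theorem tpoly_node (cs : List (L × STree L)) :
    tpoly (.node cs) = (cs.map fun p => X p.1 * tpoly p.2).sum := by
  rw [tpoly, paths, List.map_flatMap, List.flatMap_def, List.sum_flatten, List.map_map,
    ← List.attach_map_val (l := cs)]
  congr 1
  refine List.map_congr_left fun x _ => ?_
  simp only [Function.comp_def, List.map_map, tpoly, ← List.sum_map_mul_left]
  rfl

theorem contract_leaf : contract (.leaf : STree L) = .leaf := by rw [contract]

theorem contract_node_singleton (l : L) (c : STree L) :
    contract (.node [(l, c)]) = contract c := by rw [contract]

theorem contract_node {cs : List (L × STree L)} (hlen : cs.length ≠ 1) :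
    contract (.node cs) = .node (cs.map fun p => (p.1, contract p.2)) := by
  rcases cs with _ | ⟨⟨l, c⟩, _ | ⟨b, t⟩⟩
  · rw [contract] <;> simp
  · simp at hlen
  · rw [contract]
    · exact congrArg node
        (List.attach_map_val (f := fun p : L × STree L => (p.1, contract p.2)))
    all_goals simp

theorem children_contract {u : STree L} (hlen : u.children.length ≠ 1) :
    (contract u).children = u.children.map fun p => (p.1, contract p.2) := by
  cases u with
  | leaf => simp [contract_leaf, children]
  | node cs => rw [contract_node (cs := cs) hlen]; rfl

theorem outLabels_contract {u : STree L} (hlen : u.children.length ≠ 1) :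
    (contract u).outLabels = u.outLabels := by
  simp [outLabels, children_contract hlen, Function.comp_def]

theorem mem_children_contract {u c : STree L} {l : L} (hlen : u.children.length ≠ 1)
    (hc : (l, c) ∈ (contract u).children) : ∃ c₀, (l, c₀) ∈ u.children ∧ contract c₀ = c := by
  rw [children_contract hlen, List.mem_map] at hc
  obtain ⟨⟨l₀, c₀⟩, hmem, heq⟩ := hc
  obtain ⟨rfl, rfl⟩ := Prod.mk.inj heq
  exact ⟨c₀, hmem, rfl⟩

theorem outLabels_nodup {T u : STree L} (hst : IsStagedTree T) {m : ℕ} (hu : OccursAt T m u) :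
    u.outLabels.Nodup := by
  cases u with
  | leaf => simp [outLabels, children]
  | node cs => exact (hst.1 m cs hu).2

def IsContractedLabel (T : STree L) (l : L) : Prop := ∃ k c, OccursAt T k (.node [(l, c)])

theorem not_isContractedLabel {T u : STree L} (hst : IsStagedTree T) {m : ℕ}
    (hu : OccursAt T m u) (hlen : u.children.length ≠ 1) {l : L} (hl : l ∈ u.outLabels) :
    ¬ IsContractedLabel T l := by
  rintro ⟨k, c, hk⟩
  rcases hst.2 m k _ _ hu hk with hsame | hdisj
  · obtain ⟨n, hn⟩ : ∃ n, u.outLabels = List.replicate n l := ⟨_, List.eq_replicate_iff.mpr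
      ⟨rfl, fun x hx => by simpa [outLabels, children] using (hsame x).mp hx⟩⟩
    have hnd := outLabels_nodup hst hu
    rw [hn, List.nodup_replicate] at hnd
    have hpos : 0 < n := List.length_pos_of_mem (hn ▸ hl) |>.trans_eq List.length_replicate
    have hlen' : u.outLabels.length = u.children.length := List.length_map _
    rw [hn, List.length_replicate] at hlen'
    omega
  · exact hdisj l ⟨hl, by simp [outLabels, children]⟩

open scoped Classical in
noncomputable def specializeContracted (T : STree L) : MvPolynomial L ℝ →ₐ[ℝ] MvPolynomial L ℝ :=
  aeval fun l => if IsContractedLabel T l then 1 else X l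

theorem specializeContracted_X_of_isContractedLabel {T : STree L} {l : L}
    (h : IsContractedLabel T l) : specializeContracted T (X l) = 1 := by
  classical simp [specializeContracted, h]

theorem specializeContracted_X_of_not_isContractedLabel {T : STree L} {l : L}
    (h : ¬ IsContractedLabel T l) : specializeContracted T (X l) = X l := by
  classical simp [specializeContracted, h]

theorem tpoly_contract {T u : STree L} (hst : IsStagedTree T) {m : ℕ}
    (hu : OccursAt T m u) : tpoly (contract u) = specializeContracted T (tpoly u) := by
  induction u generalizing m with
  | leaf => simp [contract_leaf, tpoly_leaf]
  | node cs ih =>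
    by_cases hlen : cs.length = 1
    · obtain ⟨⟨l, c⟩, rfl⟩ := List.length_eq_one_iff.mp hlen
      rw [contract_node_singleton, tpoly_node,
        ih (l, c) (List.mem_singleton_self _) (hu.of_mem_children (List.mem_singleton_self _))]
      simp [specializeContracted_X_of_isContractedLabel ⟨m, c, hu⟩]
    · rw [contract_node hlen, tpoly_node, tpoly_node, map_list_sum, List.map_map, List.map_map]
      refine congrArg List.sum (List.map_congr_left fun p hp => ?_)
      have hl : ¬ IsContractedLabel T p.1 := not_isContractedLabel hst hu hlen
        (List.mem_map_of_mem (f := Prod.fst) hp)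
      simp only [Function.comp_apply, map_mul, specializeContracted_X_of_not_isContractedLabel hl,
        ih p hp (hu.of_mem_children (l := p.1) hp)]

theorem exists_occursAt_of_occursAt_contract {T v : STree L} {n : ℕ}
    (hv : OccursAt (contract T) n v) :
    ∃ k u, OccursAt T k u ∧ u.children.length ≠ 1 ∧ contract u = v := by
  induction T generalizing n v with
  | leaf =>
    rw [contract_leaf] at hv
    cases hv
    exact ⟨0, .leaf, .refl _, by simp [children], contract_leaf⟩
  | node cs ih =>
    by_cases hlen : cs.length = 1
    · obtain ⟨⟨l, c⟩, rfl⟩ := List.length_eq_one_iff.mp hlen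
      rw [contract_node_singleton] at hv
      obtain ⟨k, u, hu, hlu, rfl⟩ := ih (l, c) (List.mem_singleton_self _) hv
      exact ⟨k + 1, u, .child (List.mem_singleton_self _) hu, hlu, rfl⟩
    · rw [contract_node hlen] at hv
      cases hv with
      | refl => exact ⟨0, .node cs, .refl _, hlen, contract_node hlen⟩
      | child hmem hv =>
        obtain ⟨⟨l, c⟩, hc, heq⟩ := List.mem_map.mp hmem
        obtain ⟨rfl, rfl⟩ := Prod.mk.inj heq
        obtain ⟨k, u, hu, hlu, rfl⟩ := ih (l, c) hc hv
        exact ⟨k + 1, u, .child hc hu, hlu, rfl⟩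

theorem star_contract {T u w : STree L} (hst : IsStagedTree T) {m k : ℕ}
    (hu : OccursAt T m u) (hw : OccursAt T k w)
    (hlu : u.children.length ≠ 1) (hlw : w.children.length ≠ 1) (h : Star u w) :
    Star (contract u) (contract w) := by
  intro l l' c c' d d' hne hc hc' hd hd'
  obtain ⟨c₀, hc₀, rfl⟩ := mem_children_contract hlu hc
  obtain ⟨c₀', hc₀', rfl⟩ := mem_children_contract hlu hc'
  obtain ⟨d₀, hd₀, rfl⟩ := mem_children_contract hlw hd
  obtain ⟨d₀', hd₀', rfl⟩ := mem_children_contract hlw hd'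
  rw [tpoly_contract hst (hu.of_mem_children hc₀), tpoly_contract hst (hu.of_mem_children hc₀'),
    tpoly_contract hst (hw.of_mem_children hd₀), tpoly_contract hst (hw.of_mem_children hd₀'),
    ← map_mul, ← map_mul, h l l' c₀ c₀' d₀ d₀' hne hc₀ hc₀' hd₀ hd₀']

end STree

open STree in
theorem stmt4_general {L : Type} (T : STree L) (hst : IsStagedTree T)
    (hbal : Balanced T) :
    Balanced (contract T) := by
  intro n m v w hv hw hvw
  obtain ⟨k, u, hu, hlu, rfl⟩ := exists_occursAt_of_occursAt_contract hv
  obtain ⟨k', u', hu', hlu', rfl⟩ := exists_occursAt_of_occursAt_contract hw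
  have hsame : SameStage u u' := by
    simpa only [SameStage, outLabels_contract hlu, outLabels_contract hlu'] using hvw
  exact star_contract hst hu hu' hlu hlu' (hbal k k' u u' hu hu' hsame)

open STree in
theorem stmt4 {L : Type} (T : STree L) (hst : IsStagedTree T)
    (hbal : Balanced T) (hS : Stratified T) :
    Balanced (contract T) :=
  stmt4_general T hst hbal
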